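/- In the setting of the marginal function f(x) = max_{y∈Y} φ(x, y), define G(x, ε) = {∇ₓφ(x, y) : y ∈ Y^ε(x)} and S(x) = {∇ₓφ(x, y) : y ∈ Y*(x)}. Then: (c) for every fixed ε > 0, every x̄, and every single-valued selection y^ε(x) ∈ Y^ε(x), limsup_{x→x̄} ∇ₓφ(x, y^ε(x)) ⊆ {∇ₓφ(x̄, y) : y ∈ Y^ε(x̄)}; consequently limsup_{x→x̄} G(x, ε) = G(x̄, ε). (d) If S(x̄) is convex, then lim_{ε↓0} ∇ₓφ(x̄, y^ε(x̄)) is the minimal-norm element of ∂f(x̄), and if S(x) is convex for every x, then G is a descent-oriented subdifferential for f. -/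

import Mathlib

open Filter Topology Set
open scoped RealInnerProductSpace NNReal

noncomputable section

variable {E : Type*} [NormedAddCommGroup E] [InnerProductSpace ℝ E]

/-- The Clarke generalized directional derivative of `f` at `x` in direction `d`. -/
def clarkeDeriv (f : E → ℝ) (x d : E) : ℝ :=
  Filter.limsup (fun p : E × ℝ => (f (p.1 + p.2 • d) - f p.1) / p.2)
    ((𝓝 x) ×ˢ (𝓝[>] (0 : ℝ)))

/-- The Clarke subdifferential of `f` at `x`. -/
def clarkeSubdiff (f : E → ℝ) (x : E) : Set E :=
  {v | ∀ d : E, ⟪v, d⟫ ≤ clarkeDeriv f x d}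

/-- Outer limit of `G x ε` along joint sequences `ε_k ↓ 0` and `x_k → x̄`. -/
def SeqJointLimsup (G : E → ℝ → Set E) (xbar : E) : Set E :=
  {u | ∃ (eps : ℕ → ℝ) (xs : ℕ → E) (vs : ℕ → E),
    (∀ k, 0 < eps k) ∧ Tendsto eps atTop (𝓝 0) ∧ Tendsto xs atTop (𝓝 xbar) ∧
    (∀ k, vs k ∈ G (xs k) (eps k)) ∧ Tendsto vs atTop (𝓝 u)}

/-- Outer limit `limsup_{x → xbar} S x` of a set-valued map. -/
def SetMapLimsup (S : E → Set E) (xbar : E) : Set E :=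
  {u | ∃ (xs : ℕ → E) (vs : ℕ → E),
    Tendsto xs atTop (𝓝 xbar) ∧ (∀ k, vs k ∈ S (xs k)) ∧ Tendsto vs atTop (𝓝 u)}

/-- Outer limit of a family of sets `A ε` as `ε ↓ 0`. -/
def FamilyOuterLimit (A : ℝ → Set E) : Set E :=
  {u | ∃ (eps : ℕ → ℝ) (vs : ℕ → E), (∀ k, 0 < eps k) ∧ Tendsto eps atTop (𝓝 0) ∧
    (∀ k, vs k ∈ A (eps k)) ∧ Tendsto vs atTop (𝓝 u)}

/-- Inner limit of a family of sets `A ε` as `ε ↓ 0`. -/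
def FamilyInnerLimit (A : ℝ → Set E) : Set E :=
  {u | ∀ eps : ℕ → ℝ, (∀ k, 0 < eps k) → Tendsto eps atTop (𝓝 0) →
    ∃ vs : ℕ → E, (∀ᶠ k in atTop, vs k ∈ A (eps k)) ∧ Tendsto vs atTop (𝓝 u)}

/-- Painlevé–Kuratowski convergence of the family `A ε` to the set `B` as `ε ↓ 0`. -/
def PKTendsto (A : ℝ → Set E) (B : Set E) : Prop :=
  FamilyOuterLimit A ⊆ B ∧ B ⊆ FamilyInnerLimit A

/-- `g` is the minimal-norm element of `S`. -/
def IsMinNormElt (S : Set E) (g : E) : Prop :=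
  g ∈ S ∧ ∀ v ∈ S, ‖g‖ ≤ ‖v‖

/-- A descent-oriented subdifferential for `f`:  for each fixed `ε > 0` the map
`x ↦ G x ε` is closed-valued and locally bounded, (G1) the joint outer limit as
`ε ↓ 0`, `x → x̄` is contained in the Clarke subdifferential, and (G2) the sets
`limsup_{x → x̄} G x ε` converge in the Painlevé–Kuratowski sense, as `ε ↓ 0`,
to the singleton consisting of the minimal-norm Clarke subgradient. -/
structure IsDescentOrientedSubdiff (f : E → ℝ) (G : E → ℝ → Set E) : Prop where
  closedVals : ∀ ε : ℝ, 0 < ε → ∀ x : E, IsClosed (G x ε)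
  locBounded : ∀ ε : ℝ, 0 < ε → ∀ x : E,
    ∃ δ > (0 : ℝ), ∃ M : ℝ, ∀ y : E, ‖y - x‖ < δ → ∀ v ∈ G y ε, ‖v‖ ≤ M
  outerClarke : ∀ xbar : E, SeqJointLimsup G xbar ⊆ clarkeSubdiff f xbar
  minNormLimit : ∀ xbar : E, ∃ g : E, IsMinNormElt (clarkeSubdiff f xbar) g ∧
    PKTendsto (fun ε => SetMapLimsup (fun x => G x ε) xbar) {g}

variable {F : Type*} [NormedAddCommGroup F] [InnerProductSpace ℝ F]

/-- The marginal function `f(x) = max_{y ∈ Y} φ(x, y)`. -/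
def marginalMax (φ : E → F → ℝ) (Y : Set F) (x : E) : ℝ :=
  sSup ((φ x) '' Y)

/-- The solution set `Y*(x)` of the inner maximization. -/
def maxSol (φ : E → F → ℝ) (Y : Set F) (x : E) : Set F :=
  {y ∈ Y | ∀ y' ∈ Y, φ x y' ≤ φ x y}

/-- The solution set `Y^ε(x)` of the subgradient-regularized inner problem, where
`gx x y` denotes the partial gradient `∇ₓ φ (x, y)`. -/
def regMaxSol (φ : E → F → ℝ) (gx : E → F → E) (Y : Set F) (ε : ℝ) (x : E) : Set F :=
  {y ∈ Y | ∀ y' ∈ Y,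
    φ x y' - ε / 2 * ‖gx x y'‖ ^ 2 ≤ φ x y - ε / 2 * ‖gx x y‖ ^ 2}

/-!
The regularized objective `φ(x, y) - (ε/2)‖∇ₓφ(x, y)‖²` is jointly continuous in `(ε, x, y)` and
`Y` is compact, so `(ε, x) ↦ Y^ε(x)` has a closed graph; as `Y^0 = Y*`, this gives (c), the outer
limit (G1) and the outer semicontinuity of `Y*`. With the mean value theorem the latter yields
Danskin's bound `f°(x̄; d) ≤ max_{y ∈ Y*(x̄)} ⟪∇ₓφ(x̄, y), d⟫`, while each `∇ₓφ(x̄, y)` with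
`y ∈ Y*(x̄)` is a Clarke subgradient, so by separation `∂f(x̄) = S(x̄)` once `S(x̄)` is convex.
Comparing the regularized objective at `y^ε` and at a maximizer gives
`‖∇ₓφ(x̄, y^ε)‖ ≤ ‖∇ₓφ(x̄, y)‖` for all `y ∈ Y*(x̄)`, so every cluster point of
`∇ₓφ(x̄, y^ε(x̄))` as `ε ↓ 0` is an element of `S(x̄)` of minimal norm, and that element is
unique when `S(x̄)` is convex.
-/

section MinNorm

variable {V : Type*} [NormedAddCommGroup V]

lemma IsCompact.exists_isMinNormElt {S : Set V} (hS : IsCompact S) (hne : S.Nonempty) :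
    ∃ g, IsMinNormElt S g := by
  obtain ⟨g, hg, hmin⟩ := hS.exists_isMinOn hne continuous_norm.continuousOn
  exact ⟨g, hg, fun v hv => hmin hv⟩

variable [InnerProductSpace ℝ V]

lemma IsMinNormElt.eq_of_norm_le {S : Set V} {g u : V} (hg : IsMinNormElt S g)
    (hS : Convex ℝ S) (hu : u ∈ S) (hug : ‖u‖ ≤ ‖g‖) : u = g := by
  have hmid : ‖g‖ ≤ ‖(1 / 2 : ℝ) • (u + g)‖ := hg.2 _ <| by
    simpa only [smul_add] using hS hu hg.1 (by norm_num) (by norm_num) (by norm_num)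
  rw [norm_smul, Real.norm_of_nonneg (by norm_num)] at hmid
  have hpar := parallelogram_law_with_norm ℝ u g
  have hsq : ‖u - g‖ ^ 2 ≤ 0 := by
    nlinarith [hg.2 u hu, norm_nonneg (u + g), norm_nonneg g]
  exact sub_eq_zero.mp (norm_eq_zero.mp (by nlinarith [norm_nonneg (u - g)]))

lemma mem_of_forall_inner_lt_imp_le [CompleteSpace V] {S : Set V} (hconv : Convex ℝ S)
    (hclosed : IsClosed S) {v : V} (hv : ∀ d c, (∀ u ∈ S, ⟪u, d⟫ < c) → ⟪v, d⟫ ≤ c) : v ∈ S := by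
  by_contra hvS
  obtain ⟨ℓ, c, hS, hc⟩ := geometric_hahn_banach_closed_point hconv hclosed hvS
  have hℓ : ∀ z, ℓ z = ⟪z, (InnerProductSpace.toDual ℝ V).symm ℓ⟫ := fun z => by
    rw [real_inner_comm, InnerProductSpace.toDual_symm_apply]
  have := hv _ c fun u hu => hℓ u ▸ hS u hu
  linarith [hℓ v]

end MinNorm

section Clarke

variable {V : Type*} [NormedAddCommGroup V]

lemma eventually_mem_ball_diffQuot [NormedSpace ℝ V] {x : V} {r : ℝ} (hr : 0 < r) (d : V) :
    ∀ᶠ p : V × ℝ in 𝓝 x ×ˢ 𝓝[>] 0,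
      p.1 ∈ Metric.ball x r ∧ p.1 + p.2 • d ∈ Metric.ball x r ∧ 0 < p.2 := by
  have hmove : Tendsto (fun p : V × ℝ => p.1 + p.2 • d) (𝓝 x ×ˢ 𝓝[>] 0) (𝓝 x) := by
    have := (tendsto_fst (f := 𝓝 x) (g := 𝓝[>] (0 : ℝ))).add
      ((tendsto_snd.mono_right nhdsWithin_le_nhds).smul_const d)
    rwa [zero_smul, add_zero] at this
  exact (tendsto_fst.eventually (Metric.ball_mem_nhds x hr)).and
    ((hmove.eventually (Metric.ball_mem_nhds x hr)).and
      (tendsto_snd.eventually self_mem_nhdsWithin))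

variable [InnerProductSpace ℝ V] {f : V → ℝ} {x d : V}

lemma LipschitzOnWith.eventually_abs_diffQuot_le {K : ℝ≥0} {r : ℝ} (hr : 0 < r)
    (hf : LipschitzOnWith K f (Metric.ball x r)) (d : V) :
    ∀ᶠ p : V × ℝ in 𝓝 x ×ˢ 𝓝[>] 0, |(f (p.1 + p.2 • d) - f p.1) / p.2| ≤ K * ‖d‖ := by
  filter_upwards [eventually_mem_ball_diffQuot hr d] with ⟨a, t⟩ ⟨ha, hat, ht⟩
  have := hf.dist_le_mul _ hat _ ha
  rw [Real.dist_eq, dist_eq_norm, add_sub_cancel_left, norm_smul, Real.norm_of_nonneg ht.le] at this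
  rw [abs_div, abs_of_pos ht, div_le_iff₀ ht]
  linarith

lemma LipschitzOnWith.clarkeDeriv_le {K : ℝ≥0} {r c : ℝ} (hr : 0 < r)
    (hf : LipschitzOnWith K f (Metric.ball x r))
    (h : ∀ᶠ p : V × ℝ in 𝓝 x ×ˢ 𝓝[>] 0, (f (p.1 + p.2 • d) - f p.1) / p.2 ≤ c) :
    clarkeDeriv f x d ≤ c :=
  limsup_le_of_le (IsBoundedUnder.isCoboundedUnder_le ⟨-(K * ‖d‖), eventually_map.mpr <|
    (hf.eventually_abs_diffQuot_le hr d).mono fun _ hp => by linarith [(abs_le.mp hp).1]⟩) h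

lemma LipschitzOnWith.le_clarkeDeriv {K : ℝ≥0} {r c : ℝ} (hr : 0 < r)
    (hf : LipschitzOnWith K f (Metric.ball x r))
    (h : ∃ᶠ p : V × ℝ in 𝓝 x ×ˢ 𝓝[>] 0, c ≤ (f (p.1 + p.2 • d) - f p.1) / p.2) :
    c ≤ clarkeDeriv f x d :=
  le_limsup_of_frequently_le h ⟨K * ‖d‖, eventually_map.mpr <|
    (hf.eventually_abs_diffQuot_le hr d).mono fun _ hp => (abs_le.mp hp).2⟩

lemma HasGradientAt.hasDerivAt_comp_add_smul [CompleteSpace V] {g : V}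
    (hf : HasGradientAt f g x) (d : V) :
    HasDerivAt (fun t : ℝ => f (x + t • d)) ⟪g, d⟫ 0 := by
  have hline : HasDerivAt (fun t : ℝ => x + t • d) d 0 := by
    simpa using ((hasDerivAt_id (0 : ℝ)).smul_const d).const_add x
  have hf' : HasFDerivAt f (InnerProductSpace.toDual ℝ V g) (x + (0 : ℝ) • d) := by
    simpa using hf.hasFDerivAt
  have := hf'.comp_hasDerivAt 0 hline
  rwa [InnerProductSpace.toDual_apply_apply] at this

end Clarke

section Marginal

variable {V W : Type*} {φ : V → W → ℝ} {Y : Set W}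

lemma marginalMax_eq_of_mem_maxSol {x : V} {y : W} (hy : y ∈ maxSol φ Y x) :
    marginalMax φ Y x = φ x y :=
  IsGreatest.csSup_eq ⟨⟨y, hy.1, rfl⟩, by rintro _ ⟨y', hy', rfl⟩; exact hy.2 y' hy'⟩

variable [NormedAddCommGroup V] {gx : V → W → V}

lemma regMaxSol_zero (x : V) : regMaxSol φ gx Y 0 x = maxSol φ Y x := by
  simp [regMaxSol, maxSol]

lemma norm_gx_le_of_mem_regMaxSol {ε : ℝ} (hε : 0 < ε) {x : V} {y y' : W}
    (hy : y ∈ regMaxSol φ gx Y ε x) (hy' : y' ∈ maxSol φ Y x) : ‖gx x y‖ ≤ ‖gx x y'‖ := by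
  have hreg := hy.2 y' hy'.1
  have hmax := hy'.2 y hy.1
  have hsq : ‖gx x y‖ ^ 2 ≤ ‖gx x y'‖ ^ 2 := by nlinarith
  exact (pow_le_pow_iff_left₀ (norm_nonneg _) (norm_nonneg _) two_ne_zero).mp hsq

variable [TopologicalSpace W]

lemma continuous_regObjective (hφ : Continuous (Function.uncurry φ))
    (hgx : Continuous (Function.uncurry gx)) :
    Continuous fun q : ℝ × V × W => φ q.2.1 q.2.2 - q.1 / 2 * ‖gx q.2.1 q.2.2‖ ^ 2 :=
  (hφ.comp continuous_snd).sub
    ((continuous_fst.div_const 2).mul ((hgx.comp continuous_snd).norm.pow 2))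

lemma continuous_regObjective_slice (hφ : Continuous (Function.uncurry φ))
    (hgx : Continuous (Function.uncurry gx)) (ε : ℝ) (x : V) :
    Continuous fun y => φ x y - ε / 2 * ‖gx x y‖ ^ 2 :=
  (continuous_regObjective hφ hgx).comp
    (continuous_const.prodMk (continuous_const.prodMk continuous_id))

lemma isCompact_regMaxSol (hY : IsCompact Y) (hφ : Continuous (Function.uncurry φ))
    (hgx : Continuous (Function.uncurry gx)) (ε : ℝ) (x : V) :
    IsCompact (regMaxSol φ gx Y ε x) := by
  have hset : regMaxSol φ gx Y ε x =
      Y ∩ ⋂ y' ∈ Y, {y | φ x y' - ε / 2 * ‖gx x y'‖ ^ 2 ≤ φ x y - ε / 2 * ‖gx x y‖ ^ 2} := by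
    ext y
    simp [regMaxSol]
  rw [hset]
  exact hY.inter_right (isClosed_biInter fun y' _ => isClosed_le continuous_const
    (continuous_regObjective_slice hφ hgx ε x))

lemma isCompact_image_maxSol (hY : IsCompact Y) (hφ : Continuous (Function.uncurry φ))
    (hgx : Continuous (Function.uncurry gx)) (x : V) :
    IsCompact ((fun y => gx x y) '' maxSol φ Y x) :=
  (regMaxSol_zero (gx := gx) x ▸ isCompact_regMaxSol hY hφ hgx 0 x).image
    (hgx.comp (Continuous.prodMk_right x))

lemma regMaxSol_nonempty (hYne : Y.Nonempty) (hY : IsCompact Y)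
    (hφ : Continuous (Function.uncurry φ)) (hgx : Continuous (Function.uncurry gx)) (ε : ℝ)
    (x : V) : (regMaxSol φ gx Y ε x).Nonempty := by
  obtain ⟨y, hy, hmax⟩ := hY.exists_isMaxOn hYne
    (continuous_regObjective_slice hφ hgx ε x).continuousOn
  exact ⟨y, hy, fun y' hy' => hmax hy'⟩

lemma maxSol_nonempty (hYne : Y.Nonempty) (hY : IsCompact Y)
    (hφ : Continuous (Function.uncurry φ)) (hgx : Continuous (Function.uncurry gx)) (x : V) :
    (maxSol φ Y x).Nonempty :=
  regMaxSol_zero (gx := gx) x ▸ regMaxSol_nonempty hYne hY hφ hgx 0 x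

lemma le_marginalMax (hY : IsCompact Y) (hφ : Continuous (Function.uncurry φ)) {x : V} {y : W}
    (hy : y ∈ Y) : φ x y ≤ marginalMax φ Y x :=
  le_csSup (hY.image (hφ.comp (Continuous.prodMk_right x))).bddAbove ⟨y, hy, rfl⟩

lemma exists_ball_bound_gx (hY : IsCompact Y) (hgx : Continuous (Function.uncurry gx)) (x : V) :
    ∃ r > 0, ∃ L : ℝ≥0, ∀ x' ∈ Metric.ball x r, ∀ y ∈ Y, ‖gx x' y‖ ≤ L := by
  obtain ⟨C, hC⟩ :=
    hY.exists_bound_of_continuousOn (hgx.comp (Continuous.prodMk_right x)).continuousOn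
  have hev : ∀ᶠ x' in 𝓝 x, ∀ y ∈ Y, ‖gx x' y‖ < C + 1 :=
    hY.eventually_forall_of_forall_eventually fun y hy =>
      hgx.norm.continuousAt.eventually_lt continuousAt_const ((hC y hy).trans_lt (lt_add_one C))
  obtain ⟨r, hr, hball⟩ := Metric.eventually_nhds_iff_ball.mp hev
  exact ⟨r, hr, (C + 1).toNNReal, fun x' hx' y hy =>
    (hball x' hx' y hy).le.trans (Real.le_coe_toNNReal _)⟩

lemma exists_lipschitzOnWith_marginalMax [InnerProductSpace ℝ V] [CompleteSpace V]
    (hYne : Y.Nonempty) (hY : IsCompact Y) (hφ : Continuous (Function.uncurry φ))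
    (hgx : Continuous (Function.uncurry gx))
    (hgrad : ∀ x, ∀ y ∈ Y, HasGradientAt (fun x' => φ x' y) (gx x y) x) (x : V) :
    ∃ r > 0, ∃ K : ℝ≥0, LipschitzOnWith K (marginalMax φ Y) (Metric.ball x r) := by
  obtain ⟨r, hr, L, hL⟩ := exists_ball_bound_gx hY hgx x
  have hlip : ∀ y ∈ Y, LipschitzOnWith L (fun x' => φ x' y) (Metric.ball x r) := fun y hy =>
    (convex_ball x r).lipschitzOnWith_of_nnnorm_hasFDerivWithin_le
      (fun x' _ => (hgrad x' y hy).hasFDerivAt.hasFDerivWithinAt)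
      (fun x' hx' => by simpa [← NNReal.coe_le_coe] using hL x' hx' y hy)
  refine ⟨r, hr, L, LipschitzOnWith.of_le_add_mul L fun a ha b hb => ?_⟩
  obtain ⟨y, hy⟩ := maxSol_nonempty hYne hY hφ hgx a
  have hdist := (hlip y hy.1).dist_le_mul a ha b hb
  rw [Real.dist_eq] at hdist
  rw [marginalMax_eq_of_mem_maxSol hy]
  linarith [(abs_le.mp hdist).2, le_marginalMax hY hφ (x := b) hy.1]

lemma gx_mem_clarkeSubdiff [InnerProductSpace ℝ V] [CompleteSpace V]
    (hYne : Y.Nonempty) (hY : IsCompact Y) (hφ : Continuous (Function.uncurry φ))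
    (hgx : Continuous (Function.uncurry gx))
    (hgrad : ∀ x, ∀ y ∈ Y, HasGradientAt (fun x' => φ x' y) (gx x y) x) {x : V} {y : W}
    (hy : y ∈ maxSol φ Y x) : gx x y ∈ clarkeSubdiff (marginalMax φ Y) x := by
  intro d
  obtain ⟨r, hr, K, hK⟩ := exists_lipschitzOnWith_marginalMax hYne hY hφ hgx hgrad x
  refine le_of_forall_lt_imp_le_of_dense fun c hc => hK.le_clarkeDeriv hr ?_
  have hslope := ((hgrad x y hy.1).hasDerivAt_comp_add_smul d).tendsto_slope_zero_right
  have hdiag : Tendsto (fun t : ℝ => (x, t)) (𝓝[>] 0) (𝓝 x ×ˢ 𝓝[>] 0) :=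
    tendsto_const_nhds.prodMk tendsto_id
  refine hdiag.frequently (Eventually.frequently ?_)
  filter_upwards [hslope.eventually (lt_mem_nhds hc), self_mem_nhdsWithin] with t hct ht
  simp only [zero_add, zero_smul, add_zero, smul_eq_mul] at hct
  rw [le_div_iff₀ ht, marginalMax_eq_of_mem_maxSol hy]
  linarith [(lt_inv_mul_iff₀ ht).mp hct, le_marginalMax hY hφ (x := x + t • d) hy.1]

variable [FirstCountableTopology W]

lemma exists_subseq_tendsto_mem_regMaxSol (hY : IsCompact Y)
    (hφ : Continuous (Function.uncurry φ)) (hgx : Continuous (Function.uncurry gx))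
    {eps : ℕ → ℝ} {xs : ℕ → V} {ys : ℕ → W} {ε : ℝ} {x : V} (heps : Tendsto eps atTop (𝓝 ε))
    (hxs : Tendsto xs atTop (𝓝 x)) (hys : ∀ k, ys k ∈ regMaxSol φ gx Y (eps k) (xs k)) :
    ∃ y ∈ regMaxSol φ gx Y ε x, ∃ σ : ℕ → ℕ, StrictMono σ ∧ Tendsto (ys ∘ σ) atTop (𝓝 y) := by
  obtain ⟨y, hyY, σ, hσ, hyσ⟩ := hY.isSeqCompact fun k => (hys k).1
  refine ⟨y, ⟨hyY, fun y' hy' => ?_⟩, σ, hσ, hyσ⟩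
  have hψ := continuous_regObjective hφ hgx
  have hepsσ := heps.comp hσ.tendsto_atTop
  have hxsσ := hxs.comp hσ.tendsto_atTop
  exact le_of_tendsto_of_tendsto'
    ((hψ.tendsto (ε, x, y')).comp (hepsσ.prodMk_nhds (hxsσ.prodMk_nhds tendsto_const_nhds)))
    ((hψ.tendsto (ε, x, y)).comp (hepsσ.prodMk_nhds (hxsσ.prodMk_nhds hyσ)))
    fun k => (hys (σ k)).2 y' hy'

lemma mem_image_regMaxSol_of_tendsto (hY : IsCompact Y)
    (hφ : Continuous (Function.uncurry φ)) (hgx : Continuous (Function.uncurry gx))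
    {eps : ℕ → ℝ} {xs : ℕ → V} {ys : ℕ → W} {ε : ℝ} {x v : V} (heps : Tendsto eps atTop (𝓝 ε))
    (hxs : Tendsto xs atTop (𝓝 x)) (hys : ∀ k, ys k ∈ regMaxSol φ gx Y (eps k) (xs k))
    (hv : Tendsto (fun k => gx (xs k) (ys k)) atTop (𝓝 v)) :
    v ∈ (fun y => gx x y) '' regMaxSol φ gx Y ε x := by
  obtain ⟨y, hy, σ, hσ, hyσ⟩ := exists_subseq_tendsto_mem_regMaxSol hY hφ hgx heps hxs hys
  exact ⟨y, hy, tendsto_nhds_unique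
    ((hgx.tendsto (x, y)).comp ((hxs.comp hσ.tendsto_atTop).prodMk_nhds hyσ))
    (hv.comp hσ.tendsto_atTop)⟩

lemma setMapLimsup_image_regMaxSol (hY : IsCompact Y) (hφ : Continuous (Function.uncurry φ))
    (hgx : Continuous (Function.uncurry gx)) (ε : ℝ) (x : V) :
    SetMapLimsup (fun x' => (fun y => gx x' y) '' regMaxSol φ gx Y ε x') x =
      (fun y => gx x y) '' regMaxSol φ gx Y ε x := by
  refine Subset.antisymm ?_ fun v hv =>
    ⟨fun _ => x, fun _ => v, tendsto_const_nhds, fun _ => hv, tendsto_const_nhds⟩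
  rintro v ⟨xs, vs, hxs, hvs, hv⟩
  choose ys hys hyv using hvs
  refine mem_image_regMaxSol_of_tendsto hY hφ hgx tendsto_const_nhds hxs hys ?_
  simpa only [hyv] using hv

lemma exists_ball_inner_gx_lt [InnerProductSpace ℝ V] (hY : IsCompact Y)
    (hφ : Continuous (Function.uncurry φ)) (hgx : Continuous (Function.uncurry gx)) {x d : V}
    {c : ℝ} (h : ∀ y ∈ maxSol φ Y x, ⟪gx x y, d⟫ < c) :
    ∃ r > 0, ∀ ξ ∈ Metric.ball x r, ∀ x' ∈ Metric.ball x r, ∀ y ∈ maxSol φ Y x',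
      ⟪gx ξ y, d⟫ < c := by
  suffices hev : ∀ᶠ q : V × V in 𝓝 (x, x), ∀ y ∈ maxSol φ Y q.2, ⟪gx q.1 y, d⟫ < c by
    obtain ⟨r, hr, hball⟩ := Metric.eventually_nhds_iff_ball.mp hev
    exact ⟨r, hr, fun ξ hξ x' hx' => hball (ξ, x') (ball_prod_same x x r ▸ ⟨hξ, hx'⟩)⟩
  by_contra hnot
  obtain ⟨qs, hqs, hbad⟩ := exists_seq_forall_of_frequently (not_eventually.mp hnot)
  push Not at hbad
  choose ys hys hge using hbad
  obtain ⟨y, hy, σ, hσ, hyσ⟩ := exists_subseq_tendsto_mem_regMaxSol (eps := fun _ => 0) hY hφ hgx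
    tendsto_const_nhds ((continuous_snd.tendsto _).comp hqs)
    fun k => (regMaxSol_zero (qs k).2).symm ▸ hys k
  rw [regMaxSol_zero] at hy
  have hξσ := ((continuous_fst.tendsto _).comp hqs).comp hσ.tendsto_atTop
  have hlim := ((hgx.tendsto (x, y)).comp (hξσ.prodMk_nhds hyσ)).inner (𝕜 := ℝ)
    (tendsto_const_nhds (x := d))
  exact (h y hy).not_ge (ge_of_tendsto' hlim fun k => hge (σ k))

lemma clarkeDeriv_marginalMax_le [InnerProductSpace ℝ V] [CompleteSpace V]
    (hYne : Y.Nonempty) (hY : IsCompact Y) (hφ : Continuous (Function.uncurry φ))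
    (hgx : Continuous (Function.uncurry gx))
    (hgrad : ∀ x, ∀ y ∈ Y, HasGradientAt (fun x' => φ x' y) (gx x y) x) {x d : V} {c : ℝ}
    (h : ∀ y ∈ maxSol φ Y x, ⟪gx x y, d⟫ < c) : clarkeDeriv (marginalMax φ Y) x d ≤ c := by
  obtain ⟨r₀, hr₀, K, hK⟩ := exists_lipschitzOnWith_marginalMax hYne hY hφ hgx hgrad x
  obtain ⟨r, hr, hlt⟩ := exists_ball_inner_gx_lt hY hφ hgx h
  refine hK.clarkeDeriv_le hr₀ ?_
  filter_upwards [eventually_mem_ball_diffQuot hr d] with ⟨a, t⟩ ⟨ha, hat, ht⟩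
  obtain ⟨y, hy⟩ := maxSol_nonempty hYne hY hφ hgx (a + t • d)
  obtain ⟨ξ, hξ, hmvt⟩ := domain_mvt (f := fun x' => φ x' y)
    (fun z _ => (hgrad z y hy.1).hasFDerivAt.hasFDerivWithinAt) convex_univ (mem_univ a)
    (mem_univ (a + t • d))
  rw [InnerProductSpace.toDual_apply_apply, add_sub_cancel_left, real_inner_smul_right] at hmvt
  have hξc := hlt ξ ((convex_ball x r).segment_subset ha hat hξ) _ hat y hy
  rw [div_le_iff₀ ht, marginalMax_eq_of_mem_maxSol hy]
  linarith [mul_lt_mul_of_pos_left hξc ht, le_marginalMax hY hφ (x := a) hy.1]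

lemma clarkeSubdiff_marginalMax_eq [InnerProductSpace ℝ V] [CompleteSpace V]
    (hYne : Y.Nonempty) (hY : IsCompact Y) (hφ : Continuous (Function.uncurry φ))
    (hgx : Continuous (Function.uncurry gx))
    (hgrad : ∀ x, ∀ y ∈ Y, HasGradientAt (fun x' => φ x' y) (gx x y) x) {x : V}
    (hconv : Convex ℝ ((fun y => gx x y) '' maxSol φ Y x)) :
    clarkeSubdiff (marginalMax φ Y) x = (fun y => gx x y) '' maxSol φ Y x := by
  refine Subset.antisymm (fun v hv => ?_) ?_
  · refine mem_of_forall_inner_lt_imp_le hconv (isCompact_image_maxSol hY hφ hgx x).isClosed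
      fun d c hc => (hv d).trans <| clarkeDeriv_marginalMax_le hYne hY hφ hgx hgrad fun y hy =>
        hc _ (mem_image_of_mem _ hy)
  · rintro _ ⟨y, hy, rfl⟩
    exact gx_mem_clarkeSubdiff hYne hY hφ hgx hgrad hy

lemma tendsto_gx_regMaxSol_of_convex [InnerProductSpace ℝ V] (hY : IsCompact Y)
    (hφ : Continuous (Function.uncurry φ)) (hgx : Continuous (Function.uncurry gx)) {x g : V}
    (hconv : Convex ℝ ((fun y => gx x y) '' maxSol φ Y x))
    (hg : IsMinNormElt ((fun y => gx x y) '' maxSol φ Y x) g) {eps : ℕ → ℝ} {ys : ℕ → W}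
    (hpos : ∀ k, 0 < eps k) (heps : Tendsto eps atTop (𝓝 0))
    (hys : ∀ k, ys k ∈ regMaxSol φ gx Y (eps k) x) :
    Tendsto (fun k => gx x (ys k)) atTop (𝓝 g) := by
  obtain ⟨y₀, hy₀, hgy₀⟩ := hg.1
  refine tendsto_of_subseq_tendsto fun ns hns => ?_
  obtain ⟨y, hy, σ, -, hyσ⟩ := exists_subseq_tendsto_mem_regMaxSol hY hφ hgx (heps.comp hns)
    tendsto_const_nhds fun k => hys (ns k)
  rw [regMaxSol_zero] at hy
  have hlim := ((hgx.comp (Continuous.prodMk_right x)).tendsto y).comp hyσ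
  have hnorm : ‖gx x y‖ ≤ ‖g‖ := hgy₀ ▸ le_of_tendsto' hlim.norm fun k =>
    norm_gx_le_of_mem_regMaxSol (hpos _) (hys _) hy₀
  exact ⟨σ, hg.eq_of_norm_le hconv (mem_image_of_mem _ hy) hnorm ▸ hlim⟩

lemma tendsto_gx_nhdsGT_of_convex [InnerProductSpace ℝ V] (hY : IsCompact Y)
    (hφ : Continuous (Function.uncurry φ)) (hgx : Continuous (Function.uncurry gx)) {x g : V}
    (hconv : Convex ℝ ((fun y => gx x y) '' maxSol φ Y x))
    (hg : IsMinNormElt ((fun y => gx x y) '' maxSol φ Y x) g) {ysel : ℝ → W}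
    (hsel : ∀ ε > 0, ysel ε ∈ regMaxSol φ gx Y ε x) :
    Tendsto (fun ε => gx x (ysel ε)) (𝓝[>] 0) (𝓝 g) := by
  refine tendsto_of_seq_tendsto fun eps heps => ?_
  obtain ⟨K, hK⟩ := (heps.eventually self_mem_nhdsWithin).exists_forall_of_atTop
  have hpos : ∀ k, 0 < eps (k + K) := fun k => hK _ le_add_self
  exact (tendsto_add_atTop_iff_nat K).mp <| tendsto_gx_regMaxSol_of_convex hY hφ hgx hconv hg
    hpos ((tendsto_add_atTop_iff_nat K).mpr (tendsto_nhds_of_tendsto_nhdsWithin heps))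
    fun k => hsel _ (hpos k)

lemma pkTendsto_image_regMaxSol [InnerProductSpace ℝ V] (hYne : Y.Nonempty) (hY : IsCompact Y)
    (hφ : Continuous (Function.uncurry φ)) (hgx : Continuous (Function.uncurry gx)) {x g : V}
    (hconv : Convex ℝ ((fun y => gx x y) '' maxSol φ Y x))
    (hg : IsMinNormElt ((fun y => gx x y) '' maxSol φ Y x) g) :
    PKTendsto (fun ε => (fun y => gx x y) '' regMaxSol φ gx Y ε x) {g} := by
  constructor
  · rintro v ⟨eps, vs, hpos, heps, hvs, hv⟩
    choose ys hys hyv using hvs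
    refine tendsto_nhds_unique hv ?_
    simpa only [hyv] using tendsto_gx_regMaxSol_of_convex hY hφ hgx hconv hg hpos heps hys
  · rintro _ rfl eps hpos heps
    choose ys hys using fun k => regMaxSol_nonempty hYne hY hφ hgx (eps k) x
    exact ⟨fun k => gx x (ys k), Eventually.of_forall fun k => mem_image_of_mem _ (hys k),
      tendsto_gx_regMaxSol_of_convex hY hφ hgx hconv hg hpos heps hys⟩

end Marginal

theorem regularized_map_is_descentOriented_general {n m : ℕ}
    (Y : Set (EuclideanSpace ℝ (Fin m))) (hYne : Y.Nonempty)
    (hYcomp : IsCompact Y)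
    (φ : EuclideanSpace ℝ (Fin n) → EuclideanSpace ℝ (Fin m) → ℝ)
    (gx : EuclideanSpace ℝ (Fin n) → EuclideanSpace ℝ (Fin m) → EuclideanSpace ℝ (Fin n))
    (hgrad : ∀ x, ∀ y ∈ Y, HasGradientAt (fun x' => φ x' y) (gx x y) x)
    (hφcont : Continuous fun p : EuclideanSpace ℝ (Fin n) × EuclideanSpace ℝ (Fin m) => φ p.1 p.2)
    (hgxcont : Continuous fun p : EuclideanSpace ℝ (Fin n) × EuclideanSpace ℝ (Fin m) => gx p.1 p.2)
    (ysel : ℝ → EuclideanSpace ℝ (Fin n) → EuclideanSpace ℝ (Fin m))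
    (hysel : ∀ ε > (0 : ℝ), ∀ x, ysel ε x ∈ regMaxSol φ gx Y ε x) :
    (∀ ε > (0 : ℝ), ∀ xbar : EuclideanSpace ℝ (Fin n),
      (∀ (xs : ℕ → EuclideanSpace ℝ (Fin n)) (v : EuclideanSpace ℝ (Fin n)),
        Tendsto xs atTop (𝓝 xbar) →
        Tendsto (fun k => gx (xs k) (ysel ε (xs k))) atTop (𝓝 v) →
        v ∈ (fun y => gx xbar y) '' regMaxSol φ gx Y ε xbar) ∧
      SetMapLimsup (fun x => (fun y => gx x y) '' regMaxSol φ gx Y ε x) xbar =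
        (fun y => gx xbar y) '' regMaxSol φ gx Y ε xbar) ∧
    (∀ xbar : EuclideanSpace ℝ (Fin n),
      Convex ℝ ((fun y => gx xbar y) '' maxSol φ Y xbar) →
      ∃ g : EuclideanSpace ℝ (Fin n),
        IsMinNormElt (clarkeSubdiff (marginalMax φ Y) xbar) g ∧
        Tendsto (fun ε => gx xbar (ysel ε xbar)) (𝓝[>] (0 : ℝ)) (𝓝 g)) ∧
    ((∀ x : EuclideanSpace ℝ (Fin n), Convex ℝ ((fun y => gx x y) '' maxSol φ Y x)) →
      IsDescentOrientedSubdiff (marginalMax φ Y)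
        (fun x ε => (fun y => gx x y) '' regMaxSol φ gx Y ε x)) := by
  have hminNorm : ∀ x, Convex ℝ ((fun y => gx x y) '' maxSol φ Y x) →
      ∃ g, IsMinNormElt ((fun y => gx x y) '' maxSol φ Y x) g ∧
        IsMinNormElt (clarkeSubdiff (marginalMax φ Y) x) g := fun x hconv => by
    obtain ⟨g, hg⟩ := (isCompact_image_maxSol hYcomp hφcont hgxcont x).exists_isMinNormElt
      ((maxSol_nonempty hYne hYcomp hφcont hgxcont x).image _)
    exact ⟨g, hg, clarkeSubdiff_marginalMax_eq hYne hYcomp hφcont hgxcont hgrad hconv ▸ hg⟩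
  refine ⟨fun ε hε x => ⟨fun xs v hxs hv => ?_, setMapLimsup_image_regMaxSol hYcomp hφcont
    hgxcont ε x⟩, fun x hconv => ?_, fun hconv => ⟨?_, ?_, ?_, ?_⟩⟩
  · exact mem_image_regMaxSol_of_tendsto hYcomp hφcont hgxcont tendsto_const_nhds hxs
      (fun k => hysel ε hε (xs k)) hv
  · obtain ⟨g, hgS, hg⟩ := hminNorm x hconv
    exact ⟨g, hg, tendsto_gx_nhdsGT_of_convex hYcomp hφcont hgxcont hconv hgS
      fun ε hε => hysel ε hε x⟩
  · exact fun ε _ x => ((isCompact_regMaxSol hYcomp hφcont hgxcont ε x).image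
      (hgxcont.comp (Continuous.prodMk_right x))).isClosed
  · intro ε _ x
    obtain ⟨r, hr, L, hL⟩ := exists_ball_bound_gx hYcomp hgxcont x
    exact ⟨r, hr, L, fun x' hx' _ ⟨y, hy, hv⟩ => hv ▸ hL x' (mem_ball_iff_norm.mpr hx') y hy.1⟩
  · rintro x u ⟨eps, xs, vs, -, heps, hxs, hvs, hu⟩
    choose ys hys hyv using hvs
    obtain ⟨y, hy, rfl⟩ := mem_image_regMaxSol_of_tendsto hYcomp hφcont hgxcont heps hxs hys
      (by simpa only [hyv] using hu)
    exact gx_mem_clarkeSubdiff hYne hYcomp hφcont hgxcont hgrad (regMaxSol_zero x ▸ hy)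
  · intro x
    obtain ⟨g, hgS, hg⟩ := hminNorm x (hconv x)
    refine ⟨g, hg, ?_⟩
    simp only [setMapLimsup_image_regMaxSol hYcomp hφcont hgxcont]
    exact pkTendsto_image_regMaxSol hYne hYcomp hφcont hgxcont (hconv x) hgS

/-- with `G(x,ε) = {∇ₓφ(x,y) : y ∈ Y^ε(x)}` and
`S(x) = {∇ₓφ(x,y) : y ∈ Y*(x)}`:
(c) for every fixed `ε > 0`, every `x̄` and every selection `y^ε`, any limit of
`∇ₓφ(x, y^ε(x))` as `x → x̄` lies in `{∇ₓφ(x̄, y) : y ∈ Y^ε(x̄)}`; consequently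
`limsup_{x → x̄} G(x, ε) = G(x̄, ε)`;
(d) if `S(x̄)` is convex then `∇ₓφ(x̄, y^ε(x̄))` converges, as `ε ↓ 0`, to the
minimal-norm element of `∂f(x̄)`, and if `S(x)` is convex for every `x` then `G`
is a descent-oriented subdifferential for `f`. -/
theorem regularized_map_is_descentOriented {n m : ℕ}
    (Y : Set (EuclideanSpace ℝ (Fin m))) (hYne : Y.Nonempty)
    (hYconv : Convex ℝ Y) (hYcomp : IsCompact Y)
    (φ : EuclideanSpace ℝ (Fin n) → EuclideanSpace ℝ (Fin m) → ℝ)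
    (gx : EuclideanSpace ℝ (Fin n) → EuclideanSpace ℝ (Fin m) → EuclideanSpace ℝ (Fin n))
    (hgrad : ∀ x, ∀ y ∈ Y, HasGradientAt (fun x' => φ x' y) (gx x y) x)
    (hφcont : Continuous fun p : EuclideanSpace ℝ (Fin n) × EuclideanSpace ℝ (Fin m) => φ p.1 p.2)
    (hgxcont : Continuous fun p : EuclideanSpace ℝ (Fin n) × EuclideanSpace ℝ (Fin m) => gx p.1 p.2)
    (hconc : ∀ x, ConcaveOn ℝ Y (fun y => φ x y))
    (ysel : ℝ → EuclideanSpace ℝ (Fin n) → EuclideanSpace ℝ (Fin m))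
    (hysel : ∀ ε > (0 : ℝ), ∀ x, ysel ε x ∈ regMaxSol φ gx Y ε x) :
    (∀ ε > (0 : ℝ), ∀ xbar : EuclideanSpace ℝ (Fin n),
      (∀ (xs : ℕ → EuclideanSpace ℝ (Fin n)) (v : EuclideanSpace ℝ (Fin n)),
        Tendsto xs atTop (𝓝 xbar) →
        Tendsto (fun k => gx (xs k) (ysel ε (xs k))) atTop (𝓝 v) →
        v ∈ (fun y => gx xbar y) '' regMaxSol φ gx Y ε xbar) ∧
      SetMapLimsup (fun x => (fun y => gx x y) '' regMaxSol φ gx Y ε x) xbar =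
        (fun y => gx xbar y) '' regMaxSol φ gx Y ε xbar) ∧
    (∀ xbar : EuclideanSpace ℝ (Fin n),
      Convex ℝ ((fun y => gx xbar y) '' maxSol φ Y xbar) →
      ∃ g : EuclideanSpace ℝ (Fin n),
        IsMinNormElt (clarkeSubdiff (marginalMax φ Y) xbar) g ∧
        Tendsto (fun ε => gx xbar (ysel ε xbar)) (𝓝[>] (0 : ℝ)) (𝓝 g)) ∧
    ((∀ x : EuclideanSpace ℝ (Fin n), Convex ℝ ((fun y => gx x y) '' maxSol φ Y x)) →
      IsDescentOrientedSubdiff (marginalMax φ Y)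
        (fun x ε => (fun y => gx x y) '' regMaxSol φ gx Y ε x)) :=
  regularized_map_is_descentOriented_general Y hYne hYcomp φ gx hgrad hφcont hgxcont ysel hysel
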